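/- (Lemma 4, additional pruning for parametric DP.) Let P_prune = { τ ∈ T̂_{k,n-1} : L_{k,n-1}(z, τ) > L^opt_{k-1,n-1}(z) for all z ∈ R }, and define T̄_{k,n} = (T̂_{k,n-1} \ P_prune) ∪ concat(T^opt_{k-1,n-1}, n-1). Then T^opt_{k,n} ⊆ T̄_{k,n} ⊆ T̂_{k,n}, where T̂_{k,n} = ∪_{m=k}^{n-1} concat(T^opt_{k-1,m}, m). -/

import Mathlib

/-!
Every `τ ∈ T^opt_{k,n}` splits as `concat(σ, m)` where, by the Bellman inequality
`L^opt_{k,n} ≤ L^opt_{k-1,m} + C(x_{m+1:n})`, the prefix `σ` is itself optimal for length `m`;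
hence `τ ∈ T̂_{k,n}`. If `m < n - 1` then also `τ ∈ T̂_{k,n-1}`, and `τ ∉ P_prune`: at a `z`
where `τ` is optimal, dropping the last point from the last segment does not increase its cost
(the mean minimizes the sum of squared deviations), and a one-point segment costs nothing, so
`L_{k,n-1}(z,τ) ≤ L_{k,n}(z,τ) = L^opt_{k,n}(z) ≤ L^opt_{k-1,n-1}(z) + C(x_{n:n}) = L^opt_{k-1,n-1}(z)`.
The second inclusion holds because `T̂_{k,n}` grows with `n`.
-/

/-- Segment mean of entries `s` through `e` of the sequence `x`. -/
noncomputable def segMean (x : ℕ → ℝ) (s e : ℕ) : ℝ :=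
  (∑ i ∈ Finset.Icc s e, x i) / ((e - s + 1 : ℕ) : ℝ)

/-- Segment cost `C(x_{s:e}) = ∑_{i=s}^e (x_i - x̄_{s:e})²`. -/
noncomputable def segCost (x : ℕ → ℝ) (s e : ℕ) : ℝ :=
  ∑ i ∈ Finset.Icc s e, (x i - segMean x s e) ^ 2

/-- The parametrized sequence `x(z) = a + b z`. -/
def paramSeq (a b : ℕ → ℝ) (z : ℝ) : ℕ → ℝ := fun i => a i + b i * z

/-- The segment boundaries `0 = τ₀ < τ₁ < ... < τ_k < τ_{k+1} = n` associated with a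
changepoint vector `τ = (τ₁, ..., τ_k)`. -/
def bounds (n : ℕ) {k : ℕ} (τ : Fin k → ℕ) : Fin (k + 2) → ℕ :=
  Fin.snoc (Fin.cons 0 τ) n

/-- `τ` is a valid `k`-dimensional changepoint vector for a length-`n` sequence:
strictly increasing with `1 ≤ τ_i ≤ n - 1`. -/
def validCP (n : ℕ) {k : ℕ} (τ : Fin k → ℕ) : Prop :=
  StrictMono τ ∧ ∀ i, 1 ≤ τ i ∧ τ i < n

/-- The segmentation loss `L_{k,n}(x, τ) = ∑_{κ=1}^{k+1} C(x_{τ_{κ-1}+1 : τ_κ})`. -/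
noncomputable def cpLoss (x : ℕ → ℝ) (n : ℕ) {k : ℕ} (τ : Fin k → ℕ) : ℝ :=
  ∑ κ : Fin (k + 1), segCost x (bounds n τ κ.castSucc + 1) (bounds n τ κ.succ)

/-- The optimal loss `L^opt_{k,n}(x) = min_{τ ∈ T_{k,n}} L_{k,n}(x, τ)`. -/
noncomputable def optLoss (x : ℕ → ℝ) (k n : ℕ) : ℝ :=
  sInf {r : ℝ | ∃ τ : Fin k → ℕ, validCP n τ ∧ r = cpLoss x n τ}

/-- `T^opt_{k,n}`: the set of `k`-dimensional changepoint vectors that are optimal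
for the sequence `x(z) = a + b z` at some `z ∈ ℝ`. -/
def Topt (a b : ℕ → ℝ) (k n : ℕ) : Set (Fin k → ℕ) :=
  {τ | validCP n τ ∧
    ∃ z : ℝ, optLoss (paramSeq a b z) k n = cpLoss (paramSeq a b z) n τ}

/-- `T̂_{k,n} = ∪_{m=k}^{n-1} concat(T^opt_{k-1,m}, m)` (with `k = j + 1`). -/
def Tcand (a b : ℕ → ℝ) (j n : ℕ) : Set (Fin (j + 1) → ℕ) :=
  ⋃ m ∈ Set.Icc (j + 1) (n - 1), (fun τ : Fin j → ℕ => Fin.snoc τ m) '' Topt a b j m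

open Finset

theorem Finset.sum_sq_sub_mean_le {ι : Type*} (s : Finset ι) (x : ι → ℝ) (c : ℝ) :
    ∑ i ∈ s, (x i - (∑ j ∈ s, x j) / #s) ^ 2 ≤ ∑ i ∈ s, (x i - c) ^ 2 := by
  rcases s.eq_empty_or_nonempty with rfl | hs
  · simp
  have hsum : ∑ j ∈ s, x j = #s * ((∑ j ∈ s, x j) / #s) := by
    rw [mul_div_cancel₀ _ (by exact_mod_cast hs.card_ne_zero)]
  generalize (∑ j ∈ s, x j) / #s = μ at hsum ⊢
  have hsplit : ∑ i ∈ s, (x i - c) ^ 2 = ∑ i ∈ s, (x i - μ) ^ 2 + #s * (μ - c) ^ 2 := by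
    have hterm : ∀ i, (x i - c) ^ 2 = (x i - μ) ^ 2 + (μ - c) * (2 * x i - (c + μ)) :=
      fun i => by ring
    simp only [hterm, sum_add_distrib, ← mul_sum, sum_sub_distrib, sum_const, nsmul_eq_mul,
      hsum]
    ring
  rw [hsplit]
  exact le_add_of_nonneg_right (by positivity)

-- For `e < s` both sides vanish, the right one only because `x / 0 = 0`.
theorem segMean_eq_sum_div_card (x : ℕ → ℝ) (s e : ℕ) :
    segMean x s e = (∑ i ∈ Icc s e, x i) / #(Icc s e) := by
  rcases le_or_gt s e with hse | hes
  · rw [segMean, Nat.card_Icc, Nat.sub_add_comm hse]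
  · simp [segMean, Icc_eq_empty_of_lt hes]

theorem segCost_le_sum_sq_sub (x : ℕ → ℝ) (s e : ℕ) (c : ℝ) :
    segCost x s e ≤ ∑ i ∈ Icc s e, (x i - c) ^ 2 := by
  rw [segCost, segMean_eq_sum_div_card]
  exact sum_sq_sub_mean_le _ x c

theorem segCost_nonneg (x : ℕ → ℝ) (s e : ℕ) : 0 ≤ segCost x s e :=
  sum_nonneg fun _ _ => sq_nonneg _

theorem segCost_self (x : ℕ → ℝ) (n : ℕ) : segCost x n n = 0 := by
  simp [segCost, segMean]

theorem segCost_le_segCost_succ (x : ℕ → ℝ) (s e : ℕ) :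
    segCost x s e ≤ segCost x s (e + 1) := by
  rcases le_or_gt s e with hse | hes
  · have hIcc : Icc s (e + 1) = insert (e + 1) (Icc s e) := by
      ext i
      simp only [mem_Icc, mem_insert]
      omega
    calc segCost x s e ≤ ∑ i ∈ Icc s e, (x i - segMean x s (e + 1)) ^ 2 :=
          segCost_le_sum_sq_sub x s e _
      _ ≤ segCost x s (e + 1) := by
          rw [segCost, hIcc, sum_insert (by simp)]
          exact le_add_of_nonneg_left (sq_nonneg _)
  · simpa [segCost, Icc_eq_empty_of_lt hes] using segCost_nonneg x s (e + 1)

theorem bounds_castSucc (n : ℕ) {k : ℕ} (τ : Fin k → ℕ) (i : Fin (k + 1)) :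
    bounds n τ i.castSucc = (Fin.cons 0 τ : Fin (k + 1) → ℕ) i :=
  Fin.snoc_castSucc ..

theorem bounds_last (n : ℕ) {k : ℕ} (τ : Fin k → ℕ) : bounds n τ (Fin.last (k + 1)) = n :=
  Fin.snoc_last ..

theorem bounds_snoc (n m : ℕ) {j : ℕ} (σ : Fin j → ℕ) :
    bounds n (Fin.snoc σ m) = Fin.snoc (bounds m σ) n := by
  rw [bounds, bounds, Fin.cons_snoc_eq_snoc_cons]

theorem cpLoss_snoc (x : ℕ → ℝ) (n m : ℕ) {j : ℕ} (σ : Fin j → ℕ) :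
    cpLoss x n (Fin.snoc σ m) = cpLoss x m σ + segCost x (m + 1) n := by
  rw [cpLoss, Fin.sum_univ_castSucc, bounds_snoc, cpLoss]
  simp only [Fin.succ_castSucc, Fin.snoc_castSucc, Fin.succ_last, Fin.snoc_last, bounds_last]

theorem cpLoss_le_cpLoss_succ (x : ℕ → ℝ) (n : ℕ) {k : ℕ} (τ : Fin k → ℕ) :
    cpLoss x n τ ≤ cpLoss x (n + 1) τ := by
  simp only [cpLoss, Fin.sum_univ_castSucc, Fin.succ_castSucc, bounds_castSucc, Fin.succ_last,
    bounds_last]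
  gcongr
  exact segCost_le_segCost_succ x _ n

theorem validCP.snoc {j m n : ℕ} {σ : Fin j → ℕ} (hσ : validCP m σ) (hm : 1 ≤ m) (hmn : m < n) :
    validCP n (Fin.snoc σ m) := by
  refine ⟨fun p q hpq => ?_, Fin.lastCases (by simpa using ⟨hm, hmn⟩) fun i => ?_⟩
  · induction q using Fin.lastCases with
    | last =>
      induction p using Fin.lastCases with
      | last => exact absurd hpq (lt_irrefl _)
      | cast p => simpa using (hσ.2 p).2
    | cast q =>
      induction p using Fin.lastCases with
      | last => exact absurd hpq (Fin.castSucc_lt_last q).not_gt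
      | cast p => simpa using hσ.1 (Fin.castSucc_lt_castSucc_iff.1 hpq)
  · simpa using ⟨(hσ.2 i).1, (hσ.2 i).2.trans hmn⟩

theorem validCP.init {j n : ℕ} {τ : Fin (j + 1) → ℕ} (hτ : validCP n τ) :
    validCP (τ (Fin.last j)) (Fin.init τ) :=
  ⟨hτ.1.comp Fin.strictMono_castSucc, fun i => ⟨(hτ.2 _).1, hτ.1 (Fin.castSucc_lt_last i)⟩⟩

theorem validCP.succ_le_last {j n : ℕ} {τ : Fin (j + 1) → ℕ} (hτ : validCP n τ) :
    j + 1 ≤ τ (Fin.last j) := by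
  have key : ∀ i : Fin (j + 1), (i : ℕ) + 1 ≤ τ i := by
    intro i
    induction i using Fin.induction with
    | zero => exact (hτ.2 0).1
    | succ i ih => exact Nat.succ_le_of_lt (ih.trans_lt (hτ.1 (Fin.castSucc_lt_succ (i := i))))
  simpa using key (Fin.last j)

theorem exists_validCP {k n : ℕ} (h : k + 1 ≤ n) : ∃ τ : Fin k → ℕ, validCP n τ :=
  ⟨fun i => i + 1, fun _ _ hpq => Nat.succ_lt_succ hpq, fun i => ⟨le_add_self, show (i : ℕ) + 1 < n by omega⟩⟩

theorem finite_validCP (n k : ℕ) : {τ : Fin k → ℕ | validCP n τ}.Finite :=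
  (Set.Finite.pi' fun _ => Set.finite_Iio n).subset fun _ hτ i => (hτ.2 i).2

theorem finite_cpLoss_validCP (x : ℕ → ℝ) (k n : ℕ) :
    {r : ℝ | ∃ τ : Fin k → ℕ, validCP n τ ∧ r = cpLoss x n τ}.Finite :=
  ((finite_validCP n k).image fun τ => cpLoss x n τ).subset fun _ ⟨τ, hτ, hr⟩ => ⟨τ, hτ, hr.symm⟩

theorem optLoss_le (x : ℕ → ℝ) {k n : ℕ} {τ : Fin k → ℕ} (hτ : validCP n τ) :
    optLoss x k n ≤ cpLoss x n τ :=
  csInf_le (finite_cpLoss_validCP x k n).bddBelow ⟨τ, hτ, rfl⟩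

theorem exists_optLoss_eq (x : ℕ → ℝ) {k n : ℕ} (h : k + 1 ≤ n) :
    ∃ τ : Fin k → ℕ, validCP n τ ∧ optLoss x k n = cpLoss x n τ := by
  obtain ⟨τ, hτ⟩ := exists_validCP h
  exact Set.Nonempty.csInf_mem (s := {r : ℝ | ∃ τ : Fin k → ℕ, validCP n τ ∧ r = cpLoss x n τ})
    ⟨_, τ, hτ, rfl⟩ (finite_cpLoss_validCP x k n)

theorem optLoss_succ_le_optLoss_add_segCost (x : ℕ → ℝ) {j m n : ℕ} (hjm : j + 1 ≤ m)
    (hmn : m < n) : optLoss x (j + 1) n ≤ optLoss x j m + segCost x (m + 1) n := by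
  obtain ⟨σ, hσ, hopt⟩ := exists_optLoss_eq x hjm
  rw [hopt, ← cpLoss_snoc]
  exact optLoss_le x (hσ.snoc (by omega) hmn)

theorem init_mem_Topt {a b : ℕ → ℝ} {j n : ℕ} {τ : Fin (j + 1) → ℕ}
    (hτ : τ ∈ Topt a b (j + 1) n) : Fin.init τ ∈ Topt a b j (τ (Fin.last j)) := by
  obtain ⟨hv, z, hz⟩ := hτ
  refine ⟨hv.init, z, le_antisymm (optLoss_le _ hv.init) ?_⟩
  have hsplit := cpLoss_snoc (paramSeq a b z) n (τ (Fin.last j)) (Fin.init τ)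
  rw [Fin.snoc_init_self] at hsplit
  linarith [optLoss_succ_le_optLoss_add_segCost (paramSeq a b z) hv.succ_le_last (hv.2 _).2]

theorem mem_Tcand_iff {a b : ℕ → ℝ} {j n : ℕ} {τ : Fin (j + 1) → ℕ} :
    τ ∈ Tcand a b j n ↔
      τ (Fin.last j) ∈ Set.Icc (j + 1) (n - 1) ∧ Fin.init τ ∈ Topt a b j (τ (Fin.last j)) := by
  simp only [Tcand, Set.mem_iUnion₂, Set.mem_image]
  constructor
  · rintro ⟨m, hm, σ, hσ, rfl⟩
    simpa using ⟨hm, hσ⟩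
  · rintro ⟨hm, hσ⟩
    exact ⟨_, hm, _, hσ, Fin.snoc_init_self τ⟩

theorem snoc_mem_Tcand {a b : ℕ → ℝ} {j m n : ℕ} {σ : Fin j → ℕ} (hσ : σ ∈ Topt a b j m)
    (hm : m ∈ Set.Icc (j + 1) (n - 1)) : Fin.snoc σ m ∈ Tcand a b j n :=
  Set.mem_biUnion hm ⟨σ, hσ, rfl⟩

theorem Tcand_mono (a b : ℕ → ℝ) (j : ℕ) : Monotone (Tcand a b j) := fun _ _ hnn' =>
  Set.biUnion_subset_biUnion_left (Set.Icc_subset_Icc_right (Nat.sub_le_sub_right hnn' 1))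

theorem Topt_subset_Tcand (a b : ℕ → ℝ) (j n : ℕ) : Topt a b (j + 1) n ⊆ Tcand a b j n :=
  fun _ hτ => mem_Tcand_iff.2
    ⟨⟨hτ.1.succ_le_last, Nat.le_sub_one_of_lt (hτ.1.2 _).2⟩, init_mem_Topt hτ⟩

/-- Lemma 4 (additional pruning for parametric DP): with
`P_prune = { τ ∈ T̂_{k,n-1} : L_{k,n-1}(z,τ) > L^opt_{k-1,n-1}(z) for all z }` and
`T̄_{k,n} = (T̂_{k,n-1} \ P_prune) ∪ concat(T^opt_{k-1,n-1}, n-1)`,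
we have `T^opt_{k,n} ⊆ T̄_{k,n} ⊆ T̂_{k,n}` (here `k = j + 1`). -/
theorem paraDP_additional_prune (a b : ℕ → ℝ) (j n : ℕ) (hn : j + 2 ≤ n) :
    Topt a b (j + 1) n ⊆
        (Tcand a b j (n - 1) \
            {τ : Fin (j + 1) → ℕ | τ ∈ Tcand a b j (n - 1) ∧
              ∀ z : ℝ,
                optLoss (paramSeq a b z) j (n - 1) <
                  cpLoss (paramSeq a b z) (n - 1) τ}) ∪
          ((fun τ : Fin j → ℕ => Fin.snoc τ (n - 1)) '' Topt a b j (n - 1)) ∧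
      ((Tcand a b j (n - 1) \
            {τ : Fin (j + 1) → ℕ | τ ∈ Tcand a b j (n - 1) ∧
              ∀ z : ℝ,
                optLoss (paramSeq a b z) j (n - 1) <
                  cpLoss (paramSeq a b z) (n - 1) τ}) ∪
          ((fun τ : Fin j → ℕ => Fin.snoc τ (n - 1)) '' Topt a b j (n - 1))) ⊆
        Tcand a b j n := by
  obtain ⟨n, rfl⟩ : ∃ n', n = n' + 1 := ⟨n - 1, by omega⟩
  rw [Nat.add_sub_cancel]
  refine ⟨fun τ hτ => ?_, ?_⟩
  · obtain ⟨⟨hjm, hmn⟩, hσ⟩ := mem_Tcand_iff.1 (Topt_subset_Tcand a b j _ hτ)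
    rcases (show τ (Fin.last j) ≤ n by omega).lt_or_eq with hm | hm
    · refine Or.inl ⟨mem_Tcand_iff.2 ⟨⟨hjm, by omega⟩, hσ⟩, fun ⟨_, hpruned⟩ => ?_⟩
      obtain ⟨-, z, hz⟩ := hτ
      have hloss : cpLoss (paramSeq a b z) n τ ≤ optLoss (paramSeq a b z) j n := calc
        _ ≤ cpLoss (paramSeq a b z) (n + 1) τ := cpLoss_le_cpLoss_succ _ n τ
        _ = optLoss (paramSeq a b z) (j + 1) (n + 1) := hz.symm
        _ ≤ optLoss (paramSeq a b z) j n + segCost (paramSeq a b z) (n + 1) (n + 1) :=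
          optLoss_succ_le_optLoss_add_segCost _ (by omega) n.lt_succ_self
        _ = optLoss (paramSeq a b z) j n := by rw [segCost_self, add_zero]
      exact (hpruned z).not_ge hloss
    · exact Or.inr ⟨Fin.init τ, hm ▸ hσ, hm ▸ Fin.snoc_init_self τ⟩
  · rintro τ (⟨hτ, -⟩ | ⟨σ, hσ, rfl⟩)
    · exact Tcand_mono a b j n.le_succ hτ
    · exact snoc_mem_Tcand hσ ⟨by omega, by omega⟩
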